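/- arXiv:2107.11106 — 2 statements merged into one kernel-verified Lean document; each statement's English description precedes it below -/
import Mathlib

section
/- Let κ > 0 and m̄ ∈ (0,1), and suppose 0 < c < 2√(1-m̄). Then there is no C² function n : ℝ → ℝ with the properties: n(y) > 0 for all y, n(y) → 0 as y → +∞, and n satisfies n'' + cn' + (1-n)n(1-m) = 0 where m : ℝ → ℝ is continuous, increasing, with m(y) → m̄ as y → +∞ and 0 < m(y) < m̄, 0 < n(y) < 1 for all y. -/
/-!
The substitution `w y = exp (c y / 2) * n y` removes the damping term: if
`n'' + c n' + q n ≤ 0` with `q ≥ c² / 4 + k`, `k > 0`, then `w'' ≤ -k w`. A function with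
`w'' ≤ -k w` on a half-line cannot stay positive: while `w > 0` it is concave, so `w'` must stay
nonnegative (otherwise `w` drops below zero linearly), hence `w ≥ w a` and `w'' ≤ -k w a`, which
drives `w'` below zero after all. Far out, `n < ε` and `m < m̄` give
`(1 - n)(1 - m) ≥ 1 - m̄ - ε`, which exceeds `c² / 4` when `c < 2 √(1 - m̄)`, so a positive
travelling wave would have to vanish somewhere.
-/

open Real Filter Set

section HalfLine

variable {f f' : ℝ → ℝ} {a C : ℝ}

lemma sub_le_mul_sub_of_hasDerivAt_le (hf : ∀ y, HasDerivAt f (f' y) y)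
    (h : ∀ y, a ≤ y → f' y ≤ C) {x y : ℝ} (hax : a ≤ x) (hxy : x ≤ y) :
    f y - f x ≤ C * (y - x) :=
  (convex_Ici a).image_sub_le_mul_sub_of_deriv_le
    (fun z _ => (hf z).continuousAt.continuousWithinAt)
    (fun z _ => (hf z).differentiableAt.differentiableWithinAt)
    (fun z hz => by rw [(hf z).deriv]; exact h z (interior_subset hz)) x hax y (hax.trans hxy) hxy

lemma exists_neg_of_hasDerivAt_le_neg (hf : ∀ y, HasDerivAt f (f' y) y) (hC : C < 0)
    (h : ∀ y, a ≤ y → f' y ≤ C) : ∃ y, a ≤ y ∧ f y < 0 := by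
  set y := a + (|f a| + 1) / -C
  have hay : a ≤ y := le_add_of_nonneg_right (div_nonneg (by positivity) (by linarith))
  have hdrop : C * (y - a) = -(|f a| + 1) := by
    simp only [y, add_sub_cancel_left]
    field_simp [hC.ne]
  refine ⟨y, hay, ?_⟩
  linarith [sub_le_mul_sub_of_hasDerivAt_le hf h le_rfl hay, le_abs_self (f a)]

end HalfLine

lemma exists_nonpos_of_hasDerivAt_le_neg_mul {w w' w'' : ℝ → ℝ} {a k : ℝ} (hk : 0 < k)
    (hw : ∀ y, HasDerivAt w (w' y) y) (hw' : ∀ y, HasDerivAt w' (w'' y) y)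
    (h : ∀ y, a ≤ y → w'' y ≤ -k * w y) : ∃ y, a ≤ y ∧ w y ≤ 0 := by
  by_contra! hpos
  have hw''_nonpos : ∀ y, a ≤ y → w'' y ≤ 0 := fun y hy =>
    (h y hy).trans (by nlinarith [hpos y hy])
  have hw'_nonneg : ∀ y, a ≤ y → 0 ≤ w' y := by
    intro y₀ hy₀
    by_contra! hneg
    have hw'_le : ∀ y, y₀ ≤ y → w' y ≤ w' y₀ := fun y hy => by
      linarith [sub_le_mul_sub_of_hasDerivAt_le hw'
        (fun z hz => hw''_nonpos z (hy₀.trans hz)) le_rfl hy]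
    obtain ⟨y, hy, hwy⟩ := exists_neg_of_hasDerivAt_le_neg hw hneg hw'_le
    exact (hpos y (hy₀.trans hy)).not_gt hwy
  have hw_ge : ∀ y, a ≤ y → w a ≤ w y := fun y hy => by
    linarith [sub_le_mul_sub_of_hasDerivAt_le (f := fun z => -w z) (fun z => (hw z).neg)
      (fun z hz => neg_nonpos.2 (hw'_nonneg z hz)) le_rfl hy]
  obtain ⟨y, hy, hw'y⟩ := exists_neg_of_hasDerivAt_le_neg hw'
    (neg_lt_zero.2 (mul_pos hk (hpos a le_rfl)))
    fun y hy => (h y hy).trans (by nlinarith [hw_ge y hy])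
  exact (hw'_nonneg y hy).not_gt hw'y

lemma hasDerivAt_exp_mul_mul {f : ℝ → ℝ} {f' b y : ℝ} (hf : HasDerivAt f f' y) :
    HasDerivAt (fun z => exp (b * z) * f z) (exp (b * y) * (b * f y + f')) y := by
  have hexp : HasDerivAt (fun z => exp (b * z)) (exp (b * y) * b) y := by
    simpa using ((hasDerivAt_id y).const_mul b).exp
  exact (hexp.mul hf).congr_deriv (by ring)

lemma exists_nonpos_of_underdamped {n n' n'' : ℝ → ℝ} {a c k : ℝ} (hk : 0 < k)
    (hn : ∀ y, HasDerivAt n (n' y) y) (hn' : ∀ y, HasDerivAt n' (n'' y) y)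
    (h : ∀ y, a ≤ y → n'' y + c * n' y + (c ^ 2 / 4 + k) * n y ≤ 0) :
    ∃ y, a ≤ y ∧ n y ≤ 0 := by
  obtain ⟨y, hy, hwy⟩ := exists_nonpos_of_hasDerivAt_le_neg_mul hk
    (fun y => hasDerivAt_exp_mul_mul (b := c / 2) (hn y))
    (fun y => hasDerivAt_exp_mul_mul (((hn y).const_mul (c / 2)).add (hn' y)))
    fun y hy => by nlinarith [mul_le_mul_of_nonneg_left (h y hy) (exp_pos (c / 2 * y)).le]
  exact ⟨y, hy, nonpos_of_mul_nonpos_right hwy (exp_pos _)⟩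

theorem stmt_9_general (c mbar : ℝ) (hm : mbar ∈ Set.Ioo (0 : ℝ) 1)
    (hc : 0 < c) (hc2 : c < 2 * Real.sqrt (1 - mbar))
    (n ndot nddot m : ℝ → ℝ)
    (hd1 : ∀ y, HasDerivAt n (ndot y) y)
    (hd2 : ∀ y, HasDerivAt ndot (nddot y) y)
    (hode : ∀ y, nddot y + c * ndot y + (1 - n y) * n y * (1 - m y) = 0)
    (hmrange : ∀ y, 0 < m y ∧ m y < mbar)
    (hnrange : ∀ y, 0 < n y ∧ n y < 1)
    (hnlim : Tendsto n atTop (nhds 0)) :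
    False := by
  obtain ⟨hm0, hm1⟩ := hm
  have hc_sq : c ^ 2 / 4 < 1 - mbar := by
    nlinarith [sq_sqrt (sub_nonneg.2 hm1.le), sqrt_nonneg (1 - mbar)]
  obtain ⟨ε, hε, hε_def⟩ : ∃ ε, 0 < ε ∧ 2 * ε = 1 - mbar - c ^ 2 / 4 :=
    ⟨(1 - mbar - c ^ 2 / 4) / 2, by linarith, by ring⟩
  obtain ⟨Y, hY⟩ := eventually_atTop.1 ((tendsto_order.1 hnlim).2 ε hε)
  have hreaction : ∀ y, Y ≤ y → c ^ 2 / 4 + ε ≤ (1 - n y) * (1 - m y) := fun y hy => by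
    nlinarith [hY y hy, mul_nonneg (sub_nonneg.2 (hnrange y).2.le) (sub_nonneg.2 (hmrange y).2.le),
      mul_nonneg (hnrange y).1.le hm0.le]
  obtain ⟨y, -, hy⟩ := exists_nonpos_of_underdamped (c := c) hε hd1 hd2 fun y hy => by
    nlinarith [hode y, mul_le_mul_of_nonneg_left (hreaction y hy) (hnrange y).1.le]
  exact (hnrange y).1.not_ge hy

theorem stmt_9 (κ c mbar : ℝ) (hκ : 0 < κ) (hm : mbar ∈ Set.Ioo (0 : ℝ) 1)
    (hc : 0 < c) (hc2 : c < 2 * Real.sqrt (1 - mbar))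
    (n ndot nddot m : ℝ → ℝ)
    (hd1 : ∀ y, HasDerivAt n (ndot y) y)
    (hd2 : ∀ y, HasDerivAt ndot (nddot y) y)
    (hode : ∀ y, nddot y + c * ndot y + (1 - n y) * n y * (1 - m y) = 0)
    (hmcont : Continuous m) (hmmono : Monotone m)
    (hmlim : Tendsto m atTop (nhds mbar))
    (hmrange : ∀ y, 0 < m y ∧ m y < mbar)
    (hnrange : ∀ y, 0 < n y ∧ n y < 1)
    (hnlim : Tendsto n atTop (nhds 0)) :
    False :=
  stmt_9_general c mbar hm hc hc2 n ndot nddot m hd1 hd2 hode hmrange hnrange hnlim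
end

section
/- Let κ > 0, c > 0, and suppose n, p, m : (-∞, y₀) → ℝ solve n' = p, p' = -cp - (1-n)n(1-m), m' = (κ/c)m(1-m)n, with n(y) > 0 for all y < y₀, n(y) → 1, p(y) → 0, m(y) → 0 as y → -∞, m(ȳ) > 0 for some ȳ, and p(y) < 0 for all y in a neighbourhood of -∞. If there exists y₁ < y₀ with p(y₁) = 0 and p(y) < 0 for all y < y₁, then 0 < n(y₁) < 1 and p'(y₁) = -(1-n(y₁)) n(y₁) (1-m(y₁)) < 0, which contradicts p(y) < 0 for y < y₁; hence p(y) < 0 for all y < y₀. -/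
/-! A first zero `y₁` of `p` would give `p ≤ 0` on `(-∞, y₁]`, hence `p'(y₁) ≥ 0`. But `n' = p < 0`
on `(-∞, y₁)`, so `n` decreases strictly there from its limit `1`, giving `0 < n(y₁) < 1`, and then
`p'(y₁) = -(1 - n(y₁)) n(y₁) (1 - m(y₁)) < 0`. -/

open Filter Set Topology

theorem StrictAntiOn.lt_of_tendsto_atBot {α β : Type*} [LinearOrder α] [NoMinOrder α]
    [LinearOrder β] [TopologicalSpace β] [OrderClosedTopology β] {f : α → β} {a : α} {L : β}
    (hf : StrictAntiOn f (Iic a)) (hL : Tendsto f atBot (𝓝 L)) : f a < L := by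
  have : Nonempty α := ⟨a⟩
  obtain ⟨b, hba⟩ := exists_lt a
  have hfb : f b ≤ L := ge_of_tendsto hL <| (eventually_le_atBot b).mono fun z hzb =>
    hf.antitoneOn (hzb.trans hba.le) hba.le hzb
  exact (hf hba.le le_rfl hba).trans_le hfb

theorem HasDerivAt.nonneg_of_eventually_le_left {f : ℝ → ℝ} {f' x : ℝ} (hf : HasDerivAt f f' x)
    (h : ∀ᶠ y in 𝓝[<] x, f y ≤ f x) : 0 ≤ f' := by
  refine ge_of_tendsto (hasDerivAt_iff_tendsto_slope_left_right.1 hf).1 ?_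
  filter_upwards [h, self_mem_nhdsWithin] with y hy hyx
  rw [slope_def_field]
  exact div_nonneg_of_nonpos (sub_nonpos.2 hy) (sub_nonpos.2 (le_of_lt hyx))

theorem exists_first_zero_of_eventually_neg {f : ℝ → ℝ} {b : ℝ} (hf : ContinuousOn f (Iic b))
    (hneg : ∀ᶠ y in atBot, f y < 0) (hb : 0 ≤ f b) :
    ∃ x ≤ b, f x = 0 ∧ ∀ y < x, f y < 0 := by
  obtain ⟨a, ha⟩ := eventually_atBot.1 hneg
  set S := Iic b ∩ f ⁻¹' Ici 0
  have hS_closed : IsClosed S := hf.preimage_isClosed_of_isClosed isClosed_Iic isClosed_Ici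
  have hS_bdd : BddBelow S := ⟨a, fun y hy => le_of_not_ge fun hya => (ha y hya).not_ge hy.2⟩
  have hx : sInf S ∈ S := hS_closed.csInf_mem ⟨b, mem_Iic.2 le_rfl, hb⟩ hS_bdd
  have hleft : ∀ y < sInf S, f y < 0 := fun y hy =>
    lt_of_not_ge fun hfy => (csInf_le hS_bdd ⟨hy.le.trans hx.1, hfy⟩).not_gt hy
  have hx_nonpos : f (sInf S) ≤ 0 :=
    le_of_tendsto ((hf _ hx.1).mono fun y hy => (le_of_lt (mem_Iio.1 hy)).trans hx.1)
      (eventually_nhdsWithin_of_forall fun y hy => (hleft y hy).le)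
  exact ⟨sInf S, hx.1, le_antisymm hx_nonpos hx.2, hleft⟩

theorem stmt_19_general (c y₀ : ℝ)
    (n p m : ℝ → ℝ)
    (hn' : ∀ y < y₀, HasDerivAt n (p y) y)
    (hp' : ∀ y < y₀, HasDerivAt p (-c * p y - (1 - n y) * n y * (1 - m y)) y)
    (hnpos : ∀ y < y₀, 0 < n y)
    (hmrange : ∀ y < y₀, 0 < m y ∧ m y < 1)
    (hnlim : Tendsto n atBot (nhds 1))
    (hpneg : ∃ Y < y₀, ∀ y < Y, p y < 0) :
    ∀ y < y₀, p y < 0 := by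
  intro y₂ hy₂
  by_contra! hpy₂
  obtain ⟨Y, -, hpY⟩ := hpneg
  have hp_cont : ContinuousOn p (Iic y₂) := fun y hy =>
    (hp' y (hy.trans_lt hy₂)).continuousAt.continuousWithinAt
  obtain ⟨y₁, hy₁₂, hpy₁, hleft⟩ :=
    exists_first_zero_of_eventually_neg hp_cont ((eventually_lt_atBot Y).mono hpY) hpy₂
  have hy₁ : y₁ < y₀ := hy₁₂.trans_lt hy₂
  have hn_anti : StrictAntiOn n (Iic y₁) :=
    strictAntiOn_of_hasDerivWithinAt_neg (convex_Iic y₁)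
      (fun y hy => (hn' y (hy.trans_lt hy₁)).continuousAt.continuousWithinAt)
      (fun y hy => (hn' y ((interior_Iic.subset hy).trans hy₁)).hasDerivWithinAt)
      (fun y hy => hleft y (interior_Iic.subset hy))
  have hn_lt_one : n y₁ < 1 := hn_anti.lt_of_tendsto_atBot hnlim
  have hdp_nonneg := (hp' y₁ hy₁).nonneg_of_eventually_le_left <|
    eventually_nhdsWithin_of_forall fun y hy => hpy₁ ▸ (hleft y hy).le
  have hforce : 0 < (1 - n y₁) * n y₁ * (1 - m y₁) :=
    mul_pos (mul_pos (sub_pos.2 hn_lt_one) (hnpos y₁ hy₁)) (sub_pos.2 (hmrange y₁ hy₁).2)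
  rw [hpy₁, mul_zero] at hdp_nonneg
  linarith

theorem stmt_19 (κ c y₀ : ℝ) (hκ : 0 < κ) (hc : 0 < c)
    (n p m : ℝ → ℝ)
    (hn' : ∀ y < y₀, HasDerivAt n (p y) y)
    (hp' : ∀ y < y₀, HasDerivAt p (-c * p y - (1 - n y) * n y * (1 - m y)) y)
    (hm' : ∀ y < y₀, HasDerivAt m ((κ / c) * m y * (1 - m y) * n y) y)
    (hnpos : ∀ y < y₀, 0 < n y)
    (hmrange : ∀ y < y₀, 0 < m y ∧ m y < 1)
    (hnlim : Tendsto n atBot (nhds 1))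
    (hplim : Tendsto p atBot (nhds 0))
    (hmlim : Tendsto m atBot (nhds 0))
    (hmbar : ∃ ybar < y₀, 0 < m ybar)
    (hpneg : ∃ Y < y₀, ∀ y < Y, p y < 0) :
    ∀ y < y₀, p y < 0 :=
  stmt_19_general c y₀ n p m hn' hp' hnpos hmrange hnlim hpneg
end
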